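/- For every d ≥ 1 and every x ∈ ℤ^d with x ≠ 0, the limit lim_{λ→0+} a·(G_λ(0, 0) - G_λ(0, x)) exists, is finite, and equals ρ_d(x) = (a/(2π)^d) ∫_{[-π,π]^d} (cos(⟨x,θ⟩) - 1)/φ(θ) dθ. -/

import Mathlib

open MeasureTheory Real Filter Topology Asymptotics

/-!
For `λ > 0`, Fubini and `∫₀^∞ e^{-(λ - φ(θ))t} dt = 1/(λ - φ(θ))` give the resolvent formula
`G_λ(x,y) = (2π)^{-d} ∫ cos⟨θ, y - x⟩ / (λ - φ(θ)) dθ`, so `a (G_λ(0,0) - G_λ(0,x))` is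
`(a/(2π)^d) ∫ (1 - cos⟨x,θ⟩) / (λ - φ(θ)) dθ` and the limit `λ → 0+` follows by dominated
convergence once `1 - cos⟨x,θ⟩ ≤ C (-φ(θ))`. That bound holds for every `z` with `a(z) > 0`,
because `a(z)(1 - cos⟨z,θ⟩)` is one of the nonnegative terms of `-φ(θ) = ∑ a(z)(1 - cos⟨z,θ⟩)`,
and it passes to sums and negatives since `1 - cos(s + t) ≤ 2(1 - cos s) + 2(1 - cos t)`;
irreducibility says that these `z` generate `ℤ^d`.
-/

/-- Fourier symbol `φ(θ) = ∑_z a(z) cos⟨z,θ⟩` of the random walk on `ℤ^d`. -/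
noncomputable def phiSymb (d : ℕ) (a : (Fin d → ℤ) → ℝ) (θ : Fin d → ℝ) : ℝ :=
  ∑' z : Fin d → ℤ, a z * Real.cos (∑ i, (z i : ℝ) * θ i)

/-- Transition probability `p(t;x,y) = (2π)^{-d} ∫_{[-π,π]^d} e^{φ(θ)t} cos⟨θ,y-x⟩ dθ`. -/
noncomputable def ptrans (d : ℕ) (a : (Fin d → ℤ) → ℝ) (t : ℝ) (x y : Fin d → ℤ) : ℝ :=
  ((2 * π) ^ d)⁻¹ *
    ∫ θ in Set.Icc (fun _ : Fin d => -π) (fun _ : Fin d => π),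
      Real.exp (phiSymb d a θ * t) * Real.cos (∑ i, θ i * ((y i : ℝ) - (x i : ℝ)))

/-- Laplace transform `G_λ(x,y) = ∫_0^∞ e^{-λt} p(t;x,y) dt` (Green's function at `λ = 0`). -/
noncomputable def Glam (d : ℕ) (a : (Fin d → ℤ) → ℝ) (lam : ℝ) (x y : Fin d → ℤ) : ℝ :=
  ∫ t in Set.Ioi (0 : ℝ), Real.exp (-lam * t) * ptrans d a t x y

/-- Hessian matrix `φ''(0)`, with entries `-∑_z a(z) z_i z_j`. -/
noncomputable def hessPhi (d : ℕ) (a : (Fin d → ℤ) → ℝ) : Matrix (Fin d) (Fin d) ℝ :=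
  Matrix.of fun i j => -∑' z : Fin d → ℤ, a z * (z i : ℝ) * (z j : ℝ)

/-- `γ_d = (2π)^{-d/2} |det φ''(0)|^{-1/2}`. -/
noncomputable def gammaConst (d : ℕ) (a : (Fin d → ℤ) → ℝ) : ℝ :=
  ((2 * π) ^ ((d : ℝ) / 2))⁻¹ * (Real.sqrt |(hessPhi d a).det|)⁻¹

/-- `ρ_d(x) = (a/(2π)^d) ∫_{[-π,π]^d} (cos⟨x,θ⟩ - 1)/φ(θ) dθ` for `x ≠ 0`, and `ρ_d(0) = 1`. -/
noncomputable def rhoConst (d : ℕ) (a : (Fin d → ℤ) → ℝ) (x : Fin d → ℤ) : ℝ :=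
  if x = 0 then 1 else
    (-(a 0) / (2 * π) ^ d) *
      ∫ θ in Set.Icc (fun _ : Fin d => -π) (fun _ : Fin d => π),
        (Real.cos (∑ i, (x i : ℝ) * θ i) - 1) / phiSymb d a θ

/-- `γ̃_d(z) = (1/(2(2π)^d)) ∫_{ℝ^d} ⟨v,z⟩² e^{⟨φ''(0)v,v⟩/2} dv`. -/
noncomputable def gammaTilde (d : ℕ) (a : (Fin d → ℤ) → ℝ) (z : Fin d → ℤ) : ℝ :=
  (2 * (2 * π) ^ d)⁻¹ *
    ∫ v : Fin d → ℝ, (∑ i, v i * (z i : ℝ)) ^ 2 *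
      Real.exp ((∑ i, (hessPhi d a).mulVec v i * v i) / 2)

instance isFiniteMeasure_restrict_Icc_pi {ι : Type*} [Fintype ι] (a b : ι → ℝ) :
    IsFiniteMeasure (volume.restrict (Set.Icc a b)) :=
  isFiniteMeasure_restrict.2 isCompact_Icc.measure_ne_top

theorem one_sub_cos_add_le (s t : ℝ) :
    1 - cos (s + t) ≤ 2 * (1 - cos s) + 2 * (1 - cos t) := by
  nlinarith [cos_add s t, sq_nonneg (sin s - sin t), sq_nonneg (2 - cos s - cos t),
    sin_sq_add_cos_sq s, sin_sq_add_cos_sq t]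

section Laplace

variable {α : Type*} [MeasurableSpace α] {μ : Measure α} [IsFiniteMeasure μ] {g h : α → ℝ}

theorem integral_Ioi_exp_mul_integral_exp_mul (hg : Measurable g) (hg0 : ∀ θ, g θ ≤ 0)
    (hh : Measurable h) {M : ℝ} (hM : ∀ θ, |h θ| ≤ M) {lam : ℝ} (hlam : 0 < lam) :
    ∫ t in Set.Ioi 0, exp (-lam * t) * ∫ θ, exp (g θ * t) * h θ ∂μ
      = ∫ θ, h θ / (lam - g θ) ∂μ := by
  have hint : Integrable (Function.uncurry fun t θ => exp (-lam * t) * (exp (g θ * t) * h θ))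
      ((volume.restrict (Set.Ioi 0)).prod μ) := by
    refine Integrable.mono' ((exp_neg_integrableOn_Ioi 0 hlam).mul_prod (integrable_const M))
      (by fun_prop) ?_
    filter_upwards [Measure.quasiMeasurePreserving_fst.ae (ae_restrict_mem measurableSet_Ioi)]
      with ⟨t, θ⟩ (ht : 0 < t)
    have hexp : exp (g θ * t) ≤ 1 :=
      exp_le_one_iff.2 (mul_nonpos_of_nonpos_of_nonneg (hg0 θ) ht.le)
    simp only [Function.uncurry_apply_pair, norm_mul, norm_eq_abs, abs_exp]
    gcongr
    exact (mul_le_mul hexp (hM θ) (abs_nonneg _) zero_le_one).trans_eq (one_mul M)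
  have hinner (θ : α) : ∫ t in Set.Ioi 0, exp (-lam * t) * (exp (g θ * t) * h θ)
      = h θ / (lam - g θ) := by
    have hpos : 0 < lam - g θ := by linarith [hg0 θ]
    calc ∫ t in Set.Ioi 0, exp (-lam * t) * (exp (g θ * t) * h θ)
        = h θ * ∫ t in Set.Ioi 0, exp (-(lam - g θ) * t) := by
          rw [← integral_const_mul]
          congr 1 with t
          rw [show -(lam - g θ) * t = -lam * t + g θ * t by ring, exp_add]
          ring
      _ = h θ / (lam - g θ) := by
          rw [integral_exp_mul_Ioi (by linarith) 0, mul_zero, exp_zero, neg_div_neg_eq,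
            mul_one_div]
  simp_rw [← integral_const_mul]
  rw [integral_integral_swap hint]
  simp_rw [hinner]

theorem tendsto_integral_div_sub_of_isBigO {f : α → ℝ} (hf : Measurable f) (hg : Measurable g)
    (hg0 : ∀ θ, g θ ≤ 0) (hfg : f =O[⊤] g) :
    Tendsto (fun lam => ∫ θ, f θ / (lam - g θ) ∂μ) (𝓝[>] 0) (𝓝 (∫ θ, f θ / -g θ ∂μ)) := by
  obtain ⟨C, hC, hCfg⟩ := hfg.exists_nonneg
  have hbound (θ : α) : |f θ| ≤ C * -g θ := by
    simpa [abs_of_nonpos (hg0 θ)] using isBigOWith_top.1 hCfg θ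
  refine tendsto_integral_filter_of_dominated_convergence (fun _ => C)
    (Eventually.of_forall fun lam => (hf.div (measurable_const.sub hg)).aestronglyMeasurable) ?_
    (integrable_const C) (Eventually.of_forall fun θ => ?_)
  · filter_upwards [self_mem_nhdsWithin] with lam (hlam : 0 < lam)
    refine Eventually.of_forall fun θ => ?_
    have hpos : 0 < lam - g θ := by linarith [hg0 θ]
    rw [norm_div, norm_eq_abs, norm_eq_abs, abs_of_pos hpos, div_le_iff₀ hpos]
    nlinarith [hbound θ]
  · rcases (hg0 θ).lt_or_eq with hneg | hzero
    · have hcont : ContinuousAt (fun lam => f θ / (lam - g θ)) 0 :=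
        continuousAt_const.div (continuousAt_id.sub continuousAt_const) (by simp [hneg.ne])
      simpa using hcont.tendsto.mono_left nhdsWithin_le_nhds
    · have hf0 : f θ = 0 := by simpa [hzero] using hbound θ
      simp [hf0]

end Laplace

section RandomWalk

variable {d : ℕ} {a : (Fin d → ℤ) → ℝ}

theorem summable_mul_cos (ha : Summable a) (θ : Fin d → ℝ) :
    Summable fun z : Fin d → ℤ => a z * cos (∑ i, (z i : ℝ) * θ i) :=
  ha.abs.of_norm_bounded fun z => by
    simpa [abs_mul] using mul_le_of_le_one_right (abs_nonneg (a z)) (abs_cos_le_one _)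

theorem continuous_phiSymb (ha : Summable a) : Continuous (phiSymb d a) :=
  continuous_tsum (fun z => by fun_prop) ha.abs fun z θ => by
    simpa [abs_mul] using mul_le_of_le_one_right (abs_nonneg (a z)) (abs_cos_le_one _)

theorem hasSum_mul_one_sub_cos (hsum : HasSum a 0) (θ : Fin d → ℝ) :
    HasSum (fun z => a z * (1 - cos (∑ i, (z i : ℝ) * θ i))) (-phiSymb d a θ) := by
  simpa [mul_sub, phiSymb] using hsum.sub (summable_mul_cos hsum.summable θ).hasSum

theorem mul_one_sub_cos_nonneg (hpos : ∀ z, z ≠ 0 → 0 ≤ a z) (θ : Fin d → ℝ) (z : Fin d → ℤ) :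
    0 ≤ a z * (1 - cos (∑ i, (z i : ℝ) * θ i)) := by
  rcases eq_or_ne z 0 with rfl | hz
  · simp
  · exact mul_nonneg (hpos z hz) (sub_nonneg.2 (cos_le_one _))

theorem phiSymb_nonpos (hpos : ∀ z, z ≠ 0 → 0 ≤ a z) (hsum : HasSum a 0) (θ : Fin d → ℝ) :
    phiSymb d a θ ≤ 0 :=
  neg_nonneg.1 ((hasSum_mul_one_sub_cos hsum θ).nonneg (mul_one_sub_cos_nonneg hpos θ))

theorem mul_one_sub_cos_le_neg_phiSymb (hpos : ∀ z, z ≠ 0 → 0 ≤ a z) (hsum : HasSum a 0)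
    (θ : Fin d → ℝ) (z : Fin d → ℤ) :
    a z * (1 - cos (∑ i, (z i : ℝ) * θ i)) ≤ -phiSymb d a θ :=
  le_hasSum (hasSum_mul_one_sub_cos hsum θ) z fun w _ => mul_one_sub_cos_nonneg hpos θ w

theorem one_sub_cos_isBigO_phiSymb (hpos : ∀ z, z ≠ 0 → 0 ≤ a z) (hsum : HasSum a 0)
    (hirr : AddSubgroup.closure {z : Fin d → ℤ | 0 < a z} = ⊤) (x : Fin d → ℤ) :
    (fun θ => 1 - cos (∑ i, (x i : ℝ) * θ i)) =O[⊤] phiSymb d a := by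
  have hx : x ∈ AddSubgroup.closure {z : Fin d → ℤ | 0 < a z} := hirr ▸ AddSubgroup.mem_top x
  induction hx using AddSubgroup.closure_induction with
  | mem z hz =>
    refine isBigO_top.2 ⟨(a z)⁻¹, fun θ => ?_⟩
    rw [norm_of_nonneg (sub_nonneg.2 (cos_le_one _)), norm_of_nonpos (phiSymb_nonpos hpos hsum θ),
      inv_mul_eq_div, le_div_iff₀' hz]
    exact mul_one_sub_cos_le_neg_phiSymb hpos hsum θ z
  | zero => exact (isBigO_zero _ _).congr_left fun θ => by simp
  | add y z _ _ hy hz =>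
    refine (IsBigO.of_bound 2 (Eventually.of_forall fun θ => ?_)).trans (hy.add hz)
    have hnonneg (s : ℝ) : 0 ≤ 1 - cos s := sub_nonneg.2 (cos_le_one s)
    simp only [Pi.add_apply, Int.cast_add, add_mul, Finset.sum_add_distrib]
    rw [norm_of_nonneg (hnonneg _), norm_of_nonneg (add_nonneg (hnonneg _) (hnonneg _))]
    linarith [one_sub_cos_add_le (∑ i, (y i : ℝ) * θ i) (∑ i, (z i : ℝ) * θ i)]
  | neg z _ hz => simpa only [Pi.neg_apply, Int.cast_neg, neg_mul, Finset.sum_neg_distrib, cos_neg]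

theorem Glam_eq_integral (hpos : ∀ z, z ≠ 0 → 0 ≤ a z) (hsum : HasSum a 0) {lam : ℝ}
    (hlam : 0 < lam) (x y : Fin d → ℤ) :
    Glam d a lam x y = ((2 * π) ^ d)⁻¹ * ∫ θ in Set.Icc (fun _ => -π) (fun _ => π),
      cos (∑ i, θ i * ((y i : ℝ) - (x i : ℝ))) / (lam - phiSymb d a θ) := by
  rw [← integral_Ioi_exp_mul_integral_exp_mul (continuous_phiSymb hsum.summable).measurable
    (phiSymb_nonpos hpos hsum) (by fun_prop) (fun θ => abs_cos_le_one _) hlam,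
    ← integral_const_mul, Glam]
  congr with t
  rw [ptrans]
  ring

end RandomWalk

theorem rho_as_limit_general
    (d : ℕ) (a : (Fin d → ℤ) → ℝ)
    (hpos : ∀ z : Fin d → ℤ, z ≠ 0 → 0 ≤ a z)
    (hsum : HasSum a 0)
    (hirr : AddSubgroup.closure {z : Fin d → ℤ | 0 < a z} = ⊤)
    (x : Fin d → ℤ) (hx : x ≠ 0) :
    Tendsto (fun lam : ℝ => (-(a 0)) * (Glam d a lam 0 0 - Glam d a lam 0 x))
      (𝓝[>] (0 : ℝ)) (𝓝 (rhoConst d a x)) := by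
  set cube := Set.Icc (fun _ : Fin d => -π) (fun _ : Fin d => π)
  have hφ := continuous_phiSymb hsum.summable
  have hφ0 := phiSymb_nonpos hpos hsum
  have hdiff {lam : ℝ} (hlam : 0 < lam) : Glam d a lam 0 0 - Glam d a lam 0 x
      = ((2 * π) ^ d)⁻¹ *
        ∫ θ in cube, (1 - cos (∑ i, (x i : ℝ) * θ i)) / (lam - phiSymb d a θ) := by
    have hden : ∀ θ, lam - phiSymb d a θ ≠ 0 := fun θ => by linarith [hφ0 θ]
    rw [Glam_eq_integral hpos hsum hlam, Glam_eq_integral hpos hsum hlam, ← mul_sub,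
      ← integral_sub]
    · simp [cube, sub_div, mul_comm]
    all_goals exact (Continuous.div (by fun_prop) (by fun_prop) hden).integrableOn_Icc
  have hρ : rhoConst d a x = -(a 0) / (2 * π) ^ d *
      ∫ θ in cube, (1 - cos (∑ i, (x i : ℝ) * θ i)) / -phiSymb d a θ := by
    simp only [rhoConst, if_neg hx, ← neg_sub (cos _) 1, neg_div_neg_eq, cube]
  rw [hρ]
  refine ((tendsto_integral_div_sub_of_isBigO (by fun_prop) hφ.measurable hφ0
    (one_sub_cos_isBigO_phiSymb hpos hsum hirr x)).const_mul _).congr' ?_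
  filter_upwards [self_mem_nhdsWithin] with lam (hlam : 0 < lam)
  rw [hdiff hlam]
  ring

/-- For every `d ≥ 1` and `x ≠ 0`, the limit `lim_{λ→0+} a (G_λ(0,0) - G_λ(0,x))`
exists, is finite, and equals `ρ_d(x)` (given by the Fourier integral formula). -/
theorem rho_as_limit
    (d : ℕ) (hd : 1 ≤ d) (a : (Fin d → ℤ) → ℝ)
    (hpos : ∀ z : Fin d → ℤ, z ≠ 0 → 0 ≤ a z)
    (hneg : a 0 < 0)
    (hsymm : ∀ z : Fin d → ℤ, a (-z) = a z)
    (hsum : HasSum a 0)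
    (hvar : Summable fun z : Fin d → ℤ => (∑ i, ((z i : ℝ)) ^ 2) * a z)
    (hirr : AddSubgroup.closure {z : Fin d → ℤ | 0 < a z} = ⊤)
    (x : Fin d → ℤ) (hx : x ≠ 0) :
    Tendsto (fun lam : ℝ => (-(a 0)) * (Glam d a lam 0 0 - Glam d a lam 0 x))
      (𝓝[>] (0 : ℝ)) (𝓝 (rhoConst d a x)) :=
  rho_as_limit_general d a hpos hsum hirr x hx
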